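/- (Tallis moment formula) Let (Q, Q^S, Q^H) be trivariate normal with zero means, unit variances, Corr(Q,Q^S)=θ^S, Corr(Q,Q^H)=θ^H, Corr(Q^S,Q^H)=θ with the covariance matrix positive definite. Then E[Q | Q^S > τ^S, Q^H > τ^H] = [θ^S φ(τ^S) Φ̄((τ^H − θτ^S)/√(1−θ²)) + θ^H φ(τ^H) Φ̄((τ^S − θτ^H)/√(1−θ²))] / Φ̄₂(τ^S, τ^H; θ). -/

import Mathlib

open Real MeasureTheory Set Matrix

/-- standard normal density -/
noncomputable def phi (x : ℝ) : ℝ := Real.exp (-x^2/2) / Real.sqrt (2*Real.pi)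

/-- standard normal CDF -/
noncomputable def Phi (x : ℝ) : ℝ := ∫ t in Set.Iic x, phi t

/-- standard normal survival function -/
noncomputable def PhiBar (x : ℝ) : ℝ := ∫ t in Set.Ioi x, phi t

/-- standard bivariate normal density with correlation ρ -/
noncomputable def phi2 (x y ρ : ℝ) : ℝ :=
  Real.exp (-(x^2 - 2*ρ*x*y + y^2)/(2*(1-ρ^2))) / (2*Real.pi*Real.sqrt (1-ρ^2))

/-- standard bivariate normal CDF with correlation ρ -/
noncomputable def Phi2 (a b ρ : ℝ) : ℝ := ∫ x in Set.Iic a, ∫ y in Set.Iic b, phi2 x y ρ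

/-- standard bivariate normal joint survival function with correlation ρ -/
noncomputable def PhiBar2 (a b ρ : ℝ) : ℝ := ∫ x in Set.Ioi a, ∫ y in Set.Ioi b, phi2 x y ρ

/-- covariance matrix of (Q, Q^S, Q^H) -/
noncomputable def covM (θS θH θ : ℝ) : Matrix (Fin 3) (Fin 3) ℝ :=
  !![1, θS, θH; θS, 1, θ; θH, θ, 1]

/-- trivariate normal density of (Q, Q^S, Q^H) with zero means, unit variances and
correlations θS = Corr(Q,Q^S), θH = Corr(Q,Q^H), θ = Corr(Q^S,Q^H) -/
noncomputable def pdf3 (θS θH θ : ℝ) (v : Fin 3 → ℝ) : ℝ :=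
  Real.exp (-(v ⬝ᵥ ((covM θS θH θ)⁻¹ *ᵥ v))/2) /
    Real.sqrt ((2*Real.pi)^3 * (covM θS θH θ).det)

/-!
Put `α = (θS - θ θH) / (1 - θ²)` and `β = (θH - θ θS) / (1 - θ²)`. Given `(Q^S, Q^H) = (s, h)`,
`Q` is normal with mean `α s + β h` and variance `det / (1 - θ²)`, so `pdf3` is that normal density
in `q` times `phi2 s h θ`. Integrating `q` out first (Fubini; integrability comes from the same
factorisation with `q` conditioned on first), the denominator becomes `PhiBar2` and the numerator
`∫∫ (α s + β h) phi2 s h θ`. As `phi2 s h θ = φ(s) · N(θ s, 1 - θ²)(h)`, the `h`-integral is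
explicit, and integrating by parts in `s` against `-φ(s) Φ̄((τH - θ s) / √(1 - θ²))` gives the
bivariate first moments. The coefficients collapse by `α + θ β = θS` and `θ α + β = θH`.
-/

open ProbabilityTheory Filter Topology
open scoped NNReal

lemma phi_eq_gaussianPDFReal : phi = gaussianPDFReal 0 1 := by
  ext x; simp [phi, gaussianPDFReal, div_eq_inv_mul]

lemma phi_nonneg (x : ℝ) : 0 ≤ phi x := by
  unfold phi; positivity

@[fun_prop]
lemma continuous_phi : Continuous phi := by
  unfold phi; fun_prop

lemma integrable_phi : Integrable phi := by
  simpa only [phi_eq_gaussianPDFReal] using integrable_gaussianPDFReal 0 1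

section Gaussian

variable (μ : ℝ) {v : ℝ≥0}

lemma gaussianPDFReal_eq_phi (hv : v ≠ 0) (x : ℝ) :
    gaussianPDFReal μ v x = phi ((x - μ) / √v) / √v := by
  have hv' : (0 : ℝ) < v := by positivity
  rw [gaussianPDFReal, phi, div_pow, Real.sq_sqrt hv'.le, Real.sqrt_mul (by positivity)]
  field_simp

lemma hasDerivAt_gaussianPDFReal (hv : v ≠ 0) (x : ℝ) :
    HasDerivAt (gaussianPDFReal μ v) (-((x - μ) / v) * gaussianPDFReal μ v x) x := by
  have h : HasDerivAt (fun y : ℝ => -(y - μ) ^ 2 / (2 * v)) (-((x - μ) / v)) x := by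
    refine ((((hasDerivAt_id x).sub_const μ).pow 2).neg.div_const (2 * (v : ℝ))).congr_deriv ?_
    field_simp
    simp
  rw [gaussianPDFReal_def]
  exact (h.exp.const_mul (√(2 * π * v))⁻¹).congr_deriv (by ring)

lemma tendsto_gaussianPDFReal_atTop (hv : v ≠ 0) :
    Tendsto (gaussianPDFReal μ v) atTop (𝓝 0) := by
  have h : Tendsto (fun x : ℝ => -(x - μ) ^ 2 / (2 * v)) atTop atBot := by
    refine Tendsto.atBot_div_const (by positivity) (tendsto_neg_atBot_iff.2 ?_)
    exact (tendsto_pow_atTop two_ne_zero).comp (tendsto_atTop_add_const_right _ _ tendsto_id)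
  rw [gaussianPDFReal_def]
  simpa using (Real.tendsto_exp_atBot.comp h).const_mul (√(2 * π * v))⁻¹

lemma integrable_mul_gaussianPDFReal (hv : v ≠ 0) :
    Integrable (fun x => x * gaussianPDFReal μ v x) := by
  have h := (memLp_id_gaussianReal (μ := μ) (v := v) 1).integrable le_rfl
  rw [gaussianReal_of_var_ne_zero _ hv, gaussianPDF_def, integrable_withDensity_iff_integrable_smul'
    (by fun_prop) (ae_of_all _ fun _ => ENNReal.ofReal_lt_top)] at h
  refine h.congr (ae_of_all _ fun x => ?_)
  simp [ENNReal.toReal_ofReal (gaussianPDFReal_nonneg μ v x), mul_comm]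

lemma integrable_sub_mul_gaussianPDFReal (hv : v ≠ 0) :
    Integrable (fun x => (x - μ) * gaussianPDFReal μ v x) := by
  simp_rw [sub_mul]
  exact (integrable_mul_gaussianPDFReal μ hv).sub ((integrable_gaussianPDFReal μ v).const_mul μ)

lemma integral_mul_gaussianPDFReal (hv : v ≠ 0) :
    ∫ x, x * gaussianPDFReal μ v x = μ := by
  simpa [integral_gaussianReal_eq_integral_smul hv, mul_comm] using
    integral_id_gaussianReal (μ := μ) (v := v)

lemma setIntegral_Ioi_gaussianPDFReal (hv : v ≠ 0) (a : ℝ) :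
    ∫ x in Ioi a, gaussianPDFReal μ v x = PhiBar ((a - μ) / √v) := by
  have hs : 0 < √(v : ℝ) := by positivity
  have hshift := (measurePreserving_sub_right volume μ).setIntegral_preimage_emb
    (MeasurableEquiv.subRight μ).measurableEmbedding (fun y => phi (y / √v) / √v)
    (Ioi (a - μ))
  simp only [preimage_sub_const_Ioi, sub_add_cancel] at hshift
  simp_rw [gaussianPDFReal_eq_phi μ hv, hshift, div_eq_mul_inv _ (√(v : ℝ)),
    integral_mul_const, integral_comp_mul_right_Ioi phi _ (inv_pos.2 hs), PhiBar, smul_eq_mul,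
    inv_inv]
  field_simp

lemma setIntegral_Ioi_sub_mul_gaussianPDFReal (hv : v ≠ 0) (a : ℝ) :
    ∫ x in Ioi a, (x - μ) * gaussianPDFReal μ v x = v * gaussianPDFReal μ v a := by
  have hderiv : ∀ x ∈ Ici a,
      HasDerivAt (fun y => -v * gaussianPDFReal μ v y) ((x - μ) * gaussianPDFReal μ v x) x :=
    fun x _ => ((hasDerivAt_gaussianPDFReal μ hv x).const_mul (-(v : ℝ))).congr_deriv
      (by field_simp)
  have htend : Tendsto (fun y => -v * gaussianPDFReal μ v y) atTop (𝓝 0) := by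
    simpa using (tendsto_gaussianPDFReal_atTop μ hv).const_mul (-(v : ℝ))
  rw [integral_Ioi_of_hasDerivAt_of_tendsto' hderiv
    (integrable_sub_mul_gaussianPDFReal μ hv).integrableOn htend]
  ring

end Gaussian

lemma PhiBar_nonneg (x : ℝ) : 0 ≤ PhiBar x :=
  setIntegral_nonneg measurableSet_Ioi fun t _ => phi_nonneg t

lemma PhiBar_le_one (x : ℝ) : PhiBar x ≤ 1 := by
  have h : ∫ t, phi t = 1 := by
    simpa only [phi_eq_gaussianPDFReal] using integral_gaussianPDFReal_eq_one 0 one_ne_zero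
  rw [← h]
  exact setIntegral_le_integral integrable_phi (ae_of_all _ phi_nonneg)

lemma hasDerivAt_PhiBar (x : ℝ) : HasDerivAt PhiBar (-phi x) x := by
  have hsplit : PhiBar = fun y => (∫ t in y..0, phi t) + ∫ t in Ioi 0, phi t := funext fun y =>
    (intervalIntegral.integral_interval_add_Ioi integrable_phi.integrableOn
      integrable_phi.integrableOn).symm
  rw [hsplit]
  exact (intervalIntegral.integral_hasDerivAt_left integrable_phi.intervalIntegrable
    (continuous_phi.stronglyMeasurableAtFilter _ _) continuous_phi.continuousAt).add_const _

@[fun_prop]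
lemma continuous_PhiBar : Continuous PhiBar :=
  continuous_iff_continuousAt.2 fun x => (hasDerivAt_PhiBar x).continuousAt

lemma integrable_mul_phi : Integrable (fun x => x * phi x) := by
  simpa only [phi_eq_gaussianPDFReal] using integrable_mul_gaussianPDFReal 0 one_ne_zero

lemma integrable_mul_phi_mul_PhiBar {f : ℝ → ℝ} (hf : Continuous f) :
    Integrable (fun x => x * (phi x * PhiBar (f x))) := by
  have hbound : ∀ x, ‖x * (phi x * PhiBar (f x))‖ ≤ ‖x * phi x‖ := by
    intro x
    rw [← mul_assoc, norm_mul _ (PhiBar _), Real.norm_of_nonneg (PhiBar_nonneg _)]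
    exact mul_le_of_le_one_right (norm_nonneg _) (PhiBar_le_one _)
  exact Integrable.mono' integrable_mul_phi.norm (by fun_prop) (ae_of_all _ hbound)

lemma phi2_comm (x y ρ : ℝ) : phi2 x y ρ = phi2 y x ρ := by
  unfold phi2; ring_nf

section Bivariate

variable {ρ : ℝ} (hρ : ρ ^ 2 < 1)
include hρ

lemma phi2_eq_phi_mul_gaussianPDFReal (x y : ℝ) :
    phi2 x y ρ = phi x * gaussianPDFReal (ρ * x) (1 - ρ ^ 2).toNNReal y := by
  have h : 0 < 1 - ρ ^ 2 := by linarith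
  have hexp : -(x ^ 2 - 2 * ρ * x * y + y ^ 2) / (2 * (1 - ρ ^ 2))
      = -x ^ 2 / 2 + -(y - ρ * x) ^ 2 / (2 * (1 - ρ ^ 2)) := by
    field_simp; ring
  rw [gaussianPDFReal, Real.coe_toNNReal _ h.le, phi2, phi, hexp, Real.exp_add,
    Real.sqrt_mul (by positivity) (1 - ρ ^ 2)]
  field_simp
  rw [Real.sq_sqrt (by positivity)]

lemma toNNReal_one_sub_sq_ne_zero : (1 - ρ ^ 2).toNNReal ≠ 0 := by
  simpa using hρ

lemma integrable_phi2 (x : ℝ) : Integrable (fun y => phi2 x y ρ) := by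
  simp_rw [phi2_eq_phi_mul_gaussianPDFReal hρ]
  exact (integrable_gaussianPDFReal _ _).const_mul _

lemma setIntegral_Ioi_phi2 (x b : ℝ) :
    ∫ y in Ioi b, phi2 x y ρ = phi x * PhiBar ((b - ρ * x) / √(1 - ρ ^ 2)) := by
  simp_rw [phi2_eq_phi_mul_gaussianPDFReal hρ, integral_const_mul,
    setIntegral_Ioi_gaussianPDFReal _ (toNNReal_one_sub_sq_ne_zero hρ),
    Real.coe_toNNReal _ (sub_nonneg.2 hρ.le)]

lemma setIntegral_Ioi_affine_mul_phi2 (α β x b : ℝ) :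
    ∫ y in Ioi b, (α * x + β * y) * phi2 x y ρ
      = (α + ρ * β) * x * (phi x * PhiBar ((b - ρ * x) / √(1 - ρ ^ 2)))
        + β * (1 - ρ ^ 2) * phi2 x b ρ := by
  set g := gaussianPDFReal (ρ * x) (1 - ρ ^ 2).toNNReal
  have hv := toNNReal_one_sub_sq_ne_zero hρ
  have hsplit : ∀ y, (α * x + β * y) * phi2 x y ρ
      = (α + ρ * β) * x * phi2 x y ρ + β * phi x * ((y - ρ * x) * g y) := fun y => by
    rw [phi2_eq_phi_mul_gaussianPDFReal hρ]; ring
  simp_rw [hsplit]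
  rw [integral_add ((integrable_phi2 hρ x).const_mul _).integrableOn
      ((integrable_sub_mul_gaussianPDFReal _ hv).const_mul _).integrableOn,
    integral_const_mul, integral_const_mul, setIntegral_Ioi_phi2 hρ,
    setIntegral_Ioi_sub_mul_gaussianPDFReal _ hv, phi2_eq_phi_mul_gaussianPDFReal hρ x b,
    Real.coe_toNNReal _ (sub_nonneg.2 hρ.le)]
  ring

lemma setIntegral_Ioi_mul_phi_mul_PhiBar (a b : ℝ) :
    ∫ x in Ioi a, x * (phi x * PhiBar ((b - ρ * x) / √(1 - ρ ^ 2)))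
      = phi a * PhiBar ((b - ρ * a) / √(1 - ρ ^ 2))
        + ρ * (phi b * PhiBar ((a - ρ * b) / √(1 - ρ ^ 2))) := by
  set c := √(1 - ρ ^ 2)
  have hderiv : ∀ x ∈ Ici a, HasDerivAt (fun y => -(phi y * PhiBar ((b - ρ * y) / c)))
      (x * (phi x * PhiBar ((b - ρ * x) / c)) - ρ * phi2 b x ρ) x := by
    intro x _
    have hphi : HasDerivAt phi (-x * phi x) x := by
      simpa [phi_eq_gaussianPDFReal] using hasDerivAt_gaussianPDFReal 0 one_ne_zero x
    have hu : HasDerivAt (fun y => (b - ρ * y) / c) (-ρ / c) x := by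
      simpa using (((hasDerivAt_id x).const_mul ρ).const_sub b).div_const c
    refine (hphi.mul ((hasDerivAt_PhiBar _).comp x hu)).neg.congr_deriv ?_
    rw [phi2_comm b, phi2_eq_phi_mul_gaussianPDFReal hρ, gaussianPDFReal_eq_phi _
      (toNNReal_one_sub_sq_ne_zero hρ), Real.coe_toNNReal _ (sub_nonneg.2 hρ.le)]
    simp only [Function.comp_apply, c]
    ring
  have htend : Tendsto (fun y => -(phi y * PhiBar ((b - ρ * y) / c))) atTop (𝓝 0) := by
    have hphi : Tendsto phi atTop (𝓝 0) := by
      simpa only [phi_eq_gaussianPDFReal] using tendsto_gaussianPDFReal_atTop 0 one_ne_zero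
    have hbdd : IsBoundedUnder (· ≤ ·) atTop fun y => ‖PhiBar ((b - ρ * y) / c)‖ :=
      isBoundedUnder_of ⟨1, fun y => by
        rw [Real.norm_of_nonneg (PhiBar_nonneg _)]; exact PhiBar_le_one _⟩
    simpa using (hphi.zero_mul_isBoundedUnder_le hbdd).neg
  have hint₁ : IntegrableOn (fun x => x * (phi x * PhiBar ((b - ρ * x) / c))) (Ioi a) :=
    (integrable_mul_phi_mul_PhiBar (by fun_prop)).integrableOn
  have hint₂ : IntegrableOn (fun x => ρ * phi2 b x ρ) (Ioi a) :=
    ((integrable_phi2 hρ b).const_mul ρ).integrableOn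
  have h := integral_Ioi_of_hasDerivAt_of_tendsto' hderiv (hint₁.sub hint₂) htend
  rw [integral_sub hint₁ hint₂, integral_const_mul, setIntegral_Ioi_phi2 hρ] at h
  linarith

lemma setIntegral_Ioi_Ioi_affine_mul_phi2 (α β a b : ℝ) :
    ∫ x in Ioi a, ∫ y in Ioi b, (α * x + β * y) * phi2 x y ρ
      = (α + ρ * β) * phi a * PhiBar ((b - ρ * a) / √(1 - ρ ^ 2))
        + (ρ * α + β) * phi b * PhiBar ((a - ρ * b) / √(1 - ρ ^ 2)) := by
  simp_rw [setIntegral_Ioi_affine_mul_phi2 hρ, mul_assoc (α + ρ * β)]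
  have hint₁ : IntegrableOn
      (fun x => x * (phi x * PhiBar ((b - ρ * x) / √(1 - ρ ^ 2)))) (Ioi a) :=
    (integrable_mul_phi_mul_PhiBar (by fun_prop)).integrableOn
  have hint₂ : IntegrableOn (fun x => phi2 x b ρ) (Ioi a) :=
    ((integrable_phi2 hρ b).congr (ae_of_all _ fun x => phi2_comm b x ρ)).integrableOn
  rw [integral_add (hint₁.const_mul _) (hint₂.const_mul _),
    integral_const_mul, integral_const_mul, setIntegral_Ioi_mul_phi_mul_PhiBar hρ]
  simp_rw [phi2_comm _ b ρ]
  rw [setIntegral_Ioi_phi2 hρ]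
  ring

end Bivariate

section Fubini

variable {α β γ : Type*} [MeasurableSpace α] [MeasurableSpace β] [MeasurableSpace γ]
  {μ : Measure α} {ν : Measure β} {ρ : Measure γ}

lemma integrable_prod_mul_of_integral_eq_one [SFinite ν] {u : α → ℝ} {k : α → β → ℝ}
    (hm : AEStronglyMeasurable (fun p : α × β => u p.1 * k p.1 p.2) (μ.prod ν))
    (hu : Integrable u μ) (hk0 : ∀ x y, 0 ≤ k x y) (hk : ∀ x, Integrable (k x) ν)
    (hk1 : ∀ x, ∫ y, k x y ∂ν = 1) :
    Integrable (fun p : α × β => u p.1 * k p.1 p.2) (μ.prod ν) := by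
  refine (integrable_prod_iff hm).2 ⟨ae_of_all _ fun x => (hk x).const_mul (u x), ?_⟩
  refine hu.norm.congr (ae_of_all _ fun x => ?_)
  simp only [norm_mul, Real.norm_of_nonneg (hk0 _ _), integral_const_mul, hk1, mul_one]

lemma integral_setIntegral_setIntegral_swap [SFinite μ] [SFinite ν] [SFinite ρ]
    {f : α → β → γ → ℝ}
    (hf : Integrable (fun p : α × β × γ => f p.1 p.2.1 p.2.2) (μ.prod (ν.prod ρ)))
    (s : Set β) (t : Set γ) :
    ∫ x, ∫ y in s, ∫ z in t, f x y z ∂ρ ∂ν ∂μ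
      = ∫ y in s, ∫ z in t, ∫ x, f x y z ∂μ ∂ρ ∂ν := by
  set ν' := (ν.restrict s).prod (ρ.restrict t)
  have hf' : Integrable (fun p : α × β × γ => f p.1 p.2.1 p.2.2) (μ.prod ν') :=
    hf.mono_measure (Measure.prod_mono le_rfl
      (Measure.prod_mono Measure.restrict_le_self Measure.restrict_le_self))
  calc ∫ x, ∫ y in s, ∫ z in t, f x y z ∂ρ ∂ν ∂μ
      = ∫ x, ∫ p, f x p.1 p.2 ∂ν' ∂μ :=
        integral_congr_ae (hf'.prod_right_ae.mono fun x hx => (integral_prod _ hx).symm)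
    _ = ∫ p, ∫ x, f x p.1 p.2 ∂μ ∂ν' := integral_integral_swap hf'
    _ = ∫ y in s, ∫ z in t, ∫ x, f x y z ∂μ ∂ρ ∂ν :=
        integral_prod _ hf'.swap.integral_prod_left

end Fubini

lemma sq_lt_one_of_posDef {n : Type*} [Fintype n] [DecidableEq n] {A : Matrix n n ℝ}
    (hA : A.PosDef) {i j : n} (hij : i ≠ j) (hi : A i i = 1) (hj : A j j = 1) :
    A i j ^ 2 < 1 := by
  have hinj : Function.Injective ![i, j] := by
    intro k l; fin_cases k <;> fin_cases l <;> simp [hij, hij.symm]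
  have h := (hA.submatrix hinj).det_pos
  have hsymm : A j i = A i j := by simpa using hA.isHermitian.apply i j
  rw [Matrix.det_fin_two] at h
  simp [hi, hj, hsymm] at h
  nlinarith

section Trivariate

lemma det_covM (θS θH θ : ℝ) :
    (covM θS θH θ).det = 1 + 2 * θS * θH * θ - θS ^ 2 - θH ^ 2 - θ ^ 2 := by
  simp [covM, Matrix.det_fin_three]
  ring

lemma det_covM_rotate (θS θH θ : ℝ) : (covM θH θ θS).det = (covM θS θH θ).det := by
  rw [det_covM, det_covM]; ring

variable {θS θH θ : ℝ}

lemma pdf3_eq (hdet : (covM θS θH θ).det ≠ 0) (q s h : ℝ) :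
    pdf3 θS θH θ ![q, s, h] =
      Real.exp (-((1 - θ ^ 2) * q ^ 2 + (1 - θH ^ 2) * s ^ 2 + (1 - θS ^ 2) * h ^ 2
        + 2 * (θ * θH - θS) * q * s + 2 * (θ * θS - θH) * q * h
        + 2 * (θS * θH - θ) * s * h) / (2 * (covM θS θH θ).det))
        / √((2 * π) ^ 3 * (covM θS θH θ).det) := by
  rw [pdf3, Matrix.inv_def, Ring.inverse_eq_inv']
  congr 2
  rw [det_covM] at hdet ⊢
  simp [covM, Matrix.adjugate_fin_three, Matrix.mulVec, dotProduct, Fin.sum_univ_three]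
  field_simp
  ring

lemma pdf3_rotate (hdet : (covM θS θH θ).det ≠ 0) (q s h : ℝ) :
    pdf3 θS θH θ ![q, s, h] = pdf3 θH θ θS ![h, q, s] := by
  rw [pdf3_eq hdet, pdf3_eq (det_covM_rotate θS θH θ ▸ hdet), det_covM_rotate θS θH θ]
  ring_nf

lemma pdf3_eq_gaussianPDFReal_mul_phi2 (hθ : θ ^ 2 < 1) (hdet : 0 < (covM θS θH θ).det)
    (q s h : ℝ) :
    pdf3 θS θH θ ![q, s, h] =
      gaussianPDFReal ((θS - θ * θH) / (1 - θ ^ 2) * s + (θH - θ * θS) / (1 - θ ^ 2) * h)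
        ((covM θS θH θ).det / (1 - θ ^ 2)).toNNReal q * phi2 s h θ := by
  have h1 : 0 < 1 - θ ^ 2 := by linarith
  rw [pdf3_eq hdet.ne', gaussianPDFReal, Real.coe_toNNReal _ (div_pos hdet h1).le, phi2,
    inv_mul_eq_div, div_mul_div_comm, ← Real.exp_add]
  set D := (covM θS θH θ).det
  have hD : D = 1 + 2 * θS * θH * θ - θS ^ 2 - θH ^ 2 - θ ^ 2 := det_covM θS θH θ
  have hnorm :
      √((2 * π) ^ 3 * D) = √(2 * π * (D / (1 - θ ^ 2))) * (2 * π * √(1 - θ ^ 2)) := by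
    calc √((2 * π) ^ 3 * D)
        = √(2 * π * (D / (1 - θ ^ 2)) * ((2 * π) ^ 2 * (1 - θ ^ 2))) := by
          congr 1; field_simp
      _ = _ := by
          rw [Real.sqrt_mul (by have := div_pos hdet h1; positivity),
            Real.sqrt_mul (x := (2 * π) ^ 2) (by positivity), Real.sqrt_sq (by positivity)]
  rw [hnorm]
  congr 2
  field_simp
  rw [hD]
  ring

lemma toNNReal_det_covM_div_ne_zero (hθ : θ ^ 2 < 1) (hdet : 0 < (covM θS θH θ).det) :
    ((covM θS θH θ).det / (1 - θ ^ 2)).toNNReal ≠ 0 := by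
  simpa using div_pos hdet (by linarith)

lemma integrable_mul_pdf3 (hθS : θS ^ 2 < 1) (hdet : 0 < (covM θS θH θ).det) {W : ℝ → ℝ}
    (hWm : Measurable W) (hW : Integrable (fun q => W q * phi q)) :
    Integrable (fun p : ℝ × ℝ × ℝ => W p.1 * pdf3 θS θH θ ![p.1, p.2.1, p.2.2])
      (volume.prod (volume.prod volume)) := by
  have hdet' : 0 < (covM θH θ θS).det := det_covM_rotate θS θH θ ▸ hdet
  set v₁ := (1 - θS ^ 2).toNNReal
  set v₂ := ((covM θH θ θS).det / (1 - θS ^ 2)).toNNReal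
  set a := (θH - θS * θ) / (1 - θS ^ 2)
  set b := (θ - θS * θH) / (1 - θS ^ 2)
  have hv₁ : v₁ ≠ 0 := toNNReal_one_sub_sq_ne_zero hθS
  have hv₂ : v₂ ≠ 0 := toNNReal_det_covM_div_ne_zero hθS hdet'
  have hfactor : ∀ q s h, W q * pdf3 θS θH θ ![q, s, h] = W q * phi q *
      (gaussianPDFReal (θS * q) v₁ s * gaussianPDFReal (a * q + b * s) v₂ h) := by
    intro q s h
    rw [pdf3_rotate hdet.ne', pdf3_eq_gaussianPDFReal_mul_phi2 hθS hdet',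
      phi2_eq_phi_mul_gaussianPDFReal hθS]
    ring
  simp_rw [hfactor]
  have hkernel : ∀ q, Integrable (fun p : ℝ × ℝ => gaussianPDFReal (θS * q) v₁ p.1
      * gaussianPDFReal (a * q + b * p.1) v₂ p.2) (volume.prod volume) := fun q =>
    integrable_prod_mul_of_integral_eq_one (ν := volume) (u := gaussianPDFReal (θS * q) v₁)
      (k := fun s => gaussianPDFReal (a * q + b * s) v₂) (by fun_prop)
      (integrable_gaussianPDFReal _ _) (fun _ _ => gaussianPDFReal_nonneg _ _ _)
      (fun _ => integrable_gaussianPDFReal _ _) (fun _ => integral_gaussianPDFReal_eq_one _ hv₂)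
  refine integrable_prod_mul_of_integral_eq_one (ν := volume.prod volume)
    (u := fun q => W q * phi q)
    (k := fun q p =>
      gaussianPDFReal (θS * q) v₁ p.1 * gaussianPDFReal (a * q + b * p.1) v₂ p.2)
    (Measurable.aestronglyMeasurable (by fun_prop)) hW
    (fun _ _ => mul_nonneg (gaussianPDFReal_nonneg _ _ _) (gaussianPDFReal_nonneg _ _ _))
    hkernel fun q => ?_
  rw [integral_prod _ (hkernel q)]
  simp_rw [integral_const_mul, integral_gaussianPDFReal_eq_one _ hv₂, mul_one]
  exact integral_gaussianPDFReal_eq_one _ hv₁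

lemma integral_pdf3 (hθ : θ ^ 2 < 1) (hdet : 0 < (covM θS θH θ).det) (s h : ℝ) :
    ∫ q, pdf3 θS θH θ ![q, s, h] = phi2 s h θ := by
  simp_rw [pdf3_eq_gaussianPDFReal_mul_phi2 hθ hdet, integral_mul_const,
    integral_gaussianPDFReal_eq_one _ (toNNReal_det_covM_div_ne_zero hθ hdet), one_mul]

lemma integral_mul_pdf3 (hθ : θ ^ 2 < 1) (hdet : 0 < (covM θS θH θ).det) (s h : ℝ) :
    ∫ q, q * pdf3 θS θH θ ![q, s, h]
      = ((θS - θ * θH) / (1 - θ ^ 2) * s + (θH - θ * θS) / (1 - θ ^ 2) * h)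
          * phi2 s h θ := by
  simp_rw [pdf3_eq_gaussianPDFReal_mul_phi2 hθ hdet, ← mul_assoc, integral_mul_const,
    integral_mul_gaussianPDFReal _ (toNNReal_det_covM_div_ne_zero hθ hdet)]

end Trivariate

/-- Tallis moment formula for E[Q | Q^S > τ^S, Q^H > τ^H]. -/
theorem tallis_formula (θS θH θ τS τH : ℝ) (hpd : (covM θS θH θ).PosDef) :
    (∫ q : ℝ, ∫ s in Set.Ioi τS, ∫ h in Set.Ioi τH, q * pdf3 θS θH θ ![q, s, h]) /
      (∫ q : ℝ, ∫ s in Set.Ioi τS, ∫ h in Set.Ioi τH, pdf3 θS θH θ ![q, s, h]) =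
    (θS * phi τS * PhiBar ((τH - θ*τS) / Real.sqrt (1 - θ^2)) +
      θH * phi τH * PhiBar ((τS - θ*τH) / Real.sqrt (1 - θ^2))) / PhiBar2 τS τH θ := by
  have hθS : θS ^ 2 < 1 := by
    simpa [covM] using sq_lt_one_of_posDef hpd (i := 0) (j := 1) (by decide) (by simp [covM])
      (by simp [covM])
  have hθ : θ ^ 2 < 1 := by
    simpa [covM] using sq_lt_one_of_posDef hpd (i := 1) (j := 2) (by decide) (by simp [covM])
      (by simp [covM])
  have hdet := hpd.det_pos
  have hnum :=
    integrable_mul_pdf3 (θH := θH) (θ := θ) hθS hdet measurable_id integrable_mul_phi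
  have hden := by
    simpa using integrable_mul_pdf3 (θH := θH) (θ := θ) (W := fun _ => 1) hθS hdet
      measurable_const (by simpa using integrable_phi)
  rw [integral_setIntegral_setIntegral_swap (f := fun q s h => q * pdf3 θS θH θ ![q, s, h]) hnum,
    integral_setIntegral_setIntegral_swap (f := fun q s h => pdf3 θS θH θ ![q, s, h]) hden]
  simp_rw [integral_mul_pdf3 hθ hdet, integral_pdf3 hθ hdet]
  have hΔ : 1 - θ ^ 2 ≠ 0 := by linarith
  have hS : (θS - θ * θH) / (1 - θ ^ 2) + θ * ((θH - θ * θS) / (1 - θ ^ 2)) = θS := by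
    field_simp; ring
  have hH : θ * ((θS - θ * θH) / (1 - θ ^ 2)) + (θH - θ * θS) / (1 - θ ^ 2) = θH := by
    field_simp; ring
  rw [setIntegral_Ioi_Ioi_affine_mul_phi2 hθ, hS, hH, PhiBar2]
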